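/- For every n ≥ 2, the quantity d_n = (n+2)·∑_{k=1}^{n} 1/(2k+1) - (n+1)·∑_{k=1}^{n} 1/(2k) is negative. -/

import Mathlib

/-!
The increments of `d n = oddEvenHarmonicDiff n` are
`d (n+1) - d n = n / ((2n+2)(2n+3)) - ∑_{k ≤ n} (1/(2k) - 1/(2k+1))`, and the sum is at least its
first term `1/6`, which exceeds `n / ((2n+2)(2n+3))`. So `d` is strictly decreasing from `d 1 = 0`.
-/

open Finset

noncomputable def oddEvenHarmonicDiff (n : ℕ) : ℝ :=
  ((n : ℝ) + 2) * ∑ k ∈ Icc 1 n, (1 : ℝ) / (2 * k + 1) -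
    ((n : ℝ) + 1) * ∑ k ∈ Icc 1 n, (1 : ℝ) / (2 * k)

lemma one_div_six_le_sum_Icc_one_div_sub {n : ℕ} (hn : 1 ≤ n) :
    1 / 6 ≤ ∑ k ∈ Icc 1 n, ((1 : ℝ) / (2 * k) - 1 / (2 * k + 1)) := by
  have hterm : ∀ k ∈ Icc 1 n, 0 ≤ (1 : ℝ) / (2 * k) - 1 / (2 * k + 1) := fun k hk => by
    have hk : (0 : ℝ) < k := Nat.cast_pos.2 (mem_Icc.1 hk).1
    exact sub_nonneg.2 <| one_div_le_one_div_of_le (by positivity) (by linarith)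
  calc (1 : ℝ) / 6 = 1 / (2 * (1 : ℕ)) - 1 / (2 * (1 : ℕ) + 1) := by norm_num
    _ ≤ _ := single_le_sum hterm (mem_Icc.2 ⟨le_rfl, hn⟩)

lemma oddEvenHarmonicDiff_succ_sub (n : ℕ) :
    oddEvenHarmonicDiff (n + 1) - oddEvenHarmonicDiff n =
      n / ((2 * n + 2) * (2 * n + 3)) -
        ∑ k ∈ Icc 1 n, ((1 : ℝ) / (2 * k) - 1 / (2 * k + 1)) := by
  simp only [oddEvenHarmonicDiff, sum_Icc_succ_top (Nat.le_add_left 1 n), sum_sub_distrib]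
  push_cast
  field_simp
  ring

lemma oddEvenHarmonicDiff_succ_lt {n : ℕ} (hn : 1 ≤ n) :
    oddEvenHarmonicDiff (n + 1) < oddEvenHarmonicDiff n := by
  have hsum := one_div_six_le_sum_Icc_one_div_sub hn
  have hinc : (n : ℝ) / ((2 * n + 2) * (2 * n + 3)) < 1 / 6 := by
    rw [div_lt_div_iff₀ (by positivity) (by norm_num)]
    nlinarith [sq_nonneg (n : ℝ)]
  linarith [oddEvenHarmonicDiff_succ_sub n]

lemma oddEvenHarmonicDiff_one : oddEvenHarmonicDiff 1 = 0 := by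
  norm_num [oddEvenHarmonicDiff]

theorem stmt12 (n : ℕ) (hn : 2 ≤ n) :
    ((n : ℝ) + 2) * ∑ k ∈ Finset.Icc 1 n, (1 : ℝ) / (2 * k + 1) -
      ((n : ℝ) + 1) * ∑ k ∈ Finset.Icc 1 n, (1 : ℝ) / (2 * k) < 0 := by
  change oddEvenHarmonicDiff n < 0
  induction n, hn using Nat.le_induction with
  | base => exact oddEvenHarmonicDiff_one ▸ oddEvenHarmonicDiff_succ_lt le_rfl
  | succ n hn ih => exact (oddEvenHarmonicDiff_succ_lt (by omega)).trans ih
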